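/- arXiv:2605.29839 — 5 statements merged into one kernel-verified Lean document; each statement's English description precedes it below -/
import Mathlib

section
/- Let ℓ₁,…,ℓₙ be nonnegative reals with n ≥ 2 and sum L. The unbiased sample variance TSI = (1/(n-1))·(Σᵢ ℓᵢ² − L²/n) equals L²/n if and only if, up to permutation, exactly one ℓⱼ equals L and all other ℓᵢ are zero. -/
/-!
Clearing denominators, the equation says `∑ ℓᵢ² = L²`. Then `∑ ℓᵢ (L - ℓᵢ) = 0`, a sum of
nonnegative terms since `0 ≤ ℓᵢ ≤ L`, so every `ℓᵢ` is `0` or `L`; as the `ℓᵢ` add up to `L`,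
at most one of them is nonzero.
-/

open Finset

variable {K : Type*} [Field K]

theorem one_div_sub_one_mul_sub_div_eq_div_iff {x a b : K}
    (hx₀ : x ≠ 0) (hx₁ : x ≠ 1) :
    1 / (x - 1) * (a - b / x) = b / x ↔ a = b := by
  have hx₁' : x - 1 ≠ 0 := sub_ne_zero.mpr hx₁
  field_simp
  constructor
  · intro h
    have hfactor : x * (a - b) = 0 := by linear_combination h
    exact sub_eq_zero.mp ((mul_eq_zero.mp hfactor).resolve_left hx₀)
  · rintro rfl
    ring

section Ordered

variable [LinearOrder K] [IsStrictOrderedRing K]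

theorem eq_zero_or_eq_sum_of_sum_sq_eq_sq_sum {ι : Type*} {s : Finset ι} {f : ι → K}
    (hf : ∀ i ∈ s, 0 ≤ f i) (h : ∑ i ∈ s, f i ^ 2 = (∑ i ∈ s, f i) ^ 2) :
    ∀ i ∈ s, f i = 0 ∨ f i = ∑ j ∈ s, f j := by
  have hterm : ∀ i ∈ s, 0 ≤ f i * (∑ j ∈ s, f j - f i) := fun i hi =>
    mul_nonneg (hf i hi) (sub_nonneg.mpr (single_le_sum hf hi))
  have hsum : ∑ i ∈ s, f i * (∑ j ∈ s, f j - f i) = 0 := by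
    simp only [mul_sub, sum_sub_distrib, ← sum_mul, ← sq, h, sub_self]
  intro i hi
  rcases mul_eq_zero.mp ((sum_eq_zero_iff_of_nonneg hterm).mp hsum i hi) with h0 | hL
  · exact .inl h0
  · exact .inr (sub_eq_zero.mp hL).symm

theorem sum_sq_eq_sq_sum_iff {ι : Type*} [Fintype ι] [Nonempty ι] {f : ι → K}
    (hf : ∀ i, 0 ≤ f i) :
    ∑ i, f i ^ 2 = (∑ i, f i) ^ 2 ↔ ∃ j, f j = ∑ i, f i ∧ ∀ i, i ≠ j → f i = 0 := by
  classical
  constructor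
  · intro h
    have hdich := eq_zero_or_eq_sum_of_sum_sq_eq_sq_sum (fun i _ => hf i) h
    by_cases hzero : ∀ i, f i = 0
    · obtain ⟨j⟩ := ‹Nonempty ι›
      exact ⟨j, by simp [hzero], fun i _ => hzero i⟩
    push Not at hzero
    obtain ⟨j, hj⟩ := hzero
    have hfj : f j = ∑ i, f i := (hdich j (mem_univ j)).resolve_left hj
    have hrest : ∑ i ∈ univ.erase j, f i = 0 := by
      linarith [add_sum_erase univ f (mem_univ j)]
    refine ⟨j, hfj, fun i hij => ?_⟩
    exact (sum_eq_zero_iff_of_nonneg fun k _ => hf k).mp hrest i (mem_erase.mpr ⟨hij, mem_univ i⟩)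
  · rintro ⟨j, -, hz⟩
    rw [sum_eq_single j (fun i _ hij => by simp [hz i hij]) (by simp),
      sum_eq_single j (fun i _ hij => hz i hij) (by simp)]

end Ordered

theorem tsi_eq_max_iff (n : ℕ) (hn : 2 ≤ n) (ℓ : Fin n → ℝ)
    (hℓ : ∀ i, 0 ≤ ℓ i) :
    (1 / ((n : ℝ) - 1)) * (∑ i, ℓ i ^ 2 - (∑ i, ℓ i) ^ 2 / n) = (∑ i, ℓ i) ^ 2 / n ↔
      ∃ j, ℓ j = (∑ i, ℓ i) ∧ ∀ i, i ≠ j → ℓ i = 0 := by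
  have : Nonempty (Fin n) := ⟨⟨0, by omega⟩⟩
  have hn₀ : (n : ℝ) ≠ 0 := by norm_cast; omega
  have hn₁ : (n : ℝ) ≠ 1 := by norm_cast; omega
  rw [one_div_sub_one_mul_sub_div_eq_div_iff hn₀ hn₁]
  exact sum_sq_eq_sq_sum_iff hℓ
end

section
/- Let ℓ₁,…,ℓₙ be reals with n ≥ 2, mean ℓ̄ = L/n and unbiased sample variance V. As ℓ → 0, the sample variance of the appended sample (ℓ₁,…,ℓₙ,ℓ) converges to ((n−1)/n)·V + (1/(n+1))·(L/n)², which differs from V in general (non-continuity of TSI under insertion of short bars). -/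
/-! The sample variance of `(ℓ₁, …, ℓₙ, x)` is a polynomial in `x`, so its limit at `0` is its
value at `0`. There, the sum of squared deviations from the new mean `L/(n+1)` splits, by the
parallel-axis identity, into the old sum of squares `(n - 1) V` about `L/n`, the shift term
`n (L/n - L/(n+1))²`, and the deviation `(L/(n+1))²` of the appended zero; the last two add up
to `L² / (n (n+1))`. -/

open Finset Filter Topology

theorem Finset.sum_sub_sq_eq_sum_sub_average_sq_add {ι K : Type*} [Field K] [CharZero K]
    (s : Finset ι) (f : ι → K) (c : K) :
    ∑ i ∈ s, (f i - c) ^ 2 =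
      ∑ i ∈ s, (f i - (∑ j ∈ s, f j) / #s) ^ 2 + #s * ((∑ j ∈ s, f j) / #s - c) ^ 2 := by
  rcases s.eq_empty_or_nonempty with rfl | hs
  · simp
  set m := (∑ j ∈ s, f j) / #s
  have sum_sub_average : ∑ i ∈ s, (f i - m) = 0 := by
    rw [sum_sub_distrib, sum_const, nsmul_eq_mul, mul_div_cancel₀ _ (by simpa using hs.ne_empty),
      sub_self]
  calc ∑ i ∈ s, (f i - c) ^ 2
      = ∑ i ∈ s, ((f i - m) ^ 2 + 2 * (m - c) * (f i - m) + (m - c) ^ 2) :=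
        sum_congr rfl fun i _ => by ring
    _ = _ := by
      rw [sum_add_distrib, sum_add_distrib, ← mul_sum, sum_sub_average, sum_const, nsmul_eq_mul]
      ring

theorem Fin.sum_snoc_sub_sq {K : Type*} [CommRing K] {n : ℕ} (f : Fin n → K) (x c : K) :
    ∑ i : Fin (n + 1), ((Fin.snoc f x : Fin (n + 1) → K) i - c) ^ 2 =
      ∑ i, (f i - c) ^ 2 + (x - c) ^ 2 := by
  simp [Fin.sum_univ_castSucc]

theorem tsi_discontinuous_under_short_bar_insertion (n : ℕ) (hn : 2 ≤ n) (ℓ : Fin n → ℝ) :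
    Tendsto
      (fun x : ℝ =>
        (1 / ((n : ℝ) + 1 - 1)) *
          ∑ i : Fin (n + 1),
            ((Fin.snoc ℓ x : Fin (n + 1) → ℝ) i -
              (∑ j : Fin (n + 1), (Fin.snoc ℓ x : Fin (n + 1) → ℝ) j) / ((n : ℝ) + 1)) ^ 2)
      (𝓝 0)
      (𝓝 ((((n : ℝ) - 1) / n) *
            ((1 / ((n : ℝ) - 1)) * ∑ i, (ℓ i - (∑ j, ℓ j) / n) ^ 2) +
          (1 / ((n : ℝ) + 1)) * ((∑ j, ℓ j) / n) ^ 2)) := by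
  refine Continuous.tendsto' (by fun_prop) 0 _ ?_
  have hn₀ : (n : ℝ) ≠ 0 := Nat.cast_ne_zero.2 (by omega)
  have hn₁ : (n : ℝ) - 1 ≠ 0 := sub_ne_zero.2 (by exact_mod_cast (by omega : n ≠ 1))
  simp only [Fin.sum_snoc, Fin.sum_snoc_sub_sq, add_zero, zero_sub, neg_sq, add_sub_cancel_right]
  rw [Finset.sum_sub_sq_eq_sum_sub_average_sq_add univ ℓ, card_univ, Fintype.card_fin]
  generalize ∑ i, (ℓ i - (∑ j, ℓ j) / n) ^ 2 = V
  generalize ∑ j, ℓ j = S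
  field_simp
  ring
end

section
/- Let ℓ₁,…,ℓₙ be nonnegative reals with n ≥ 2 and let 2 ≤ p < ∞. Then the unbiased sample variance satisfies TSI(ℓ) ≤ 4·n^(−2/p)·(‖ℓ‖_p/2)², i.e. TSI(ℓ) ≤ n^(−2/p)·(Σᵢ ℓᵢ^p)^(2/p). -/
open Finset

theorem tsi_wasserstein_bound (n : ℕ) (hn : 2 ≤ n) (ℓ : Fin n → ℝ)
    (hℓ : ∀ i, 0 ≤ ℓ i) (p : ℝ) (hp : 2 ≤ p) :
    (1 / ((n : ℝ) - 1)) * (∑ i, ℓ i ^ 2 - (∑ i, ℓ i) ^ 2 / n) ≤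
      4 * (n : ℝ) ^ (-2 / p) * (((∑ i, ℓ i ^ p) ^ (1 / p) / 2) ^ 2 : ℝ) := by
  have hn0 : (0 : ℝ) < n := by positivity
  have hn2 : (2 : ℝ) ≤ n := by exact_mod_cast hn
  have hn1 : (0 : ℝ) < (n : ℝ) - 1 := by linarith
  have hp0 : (0 : ℝ) < p := by linarith
  have hS2 : (0 : ℝ) ≤ ∑ i, ℓ i ^ 2 := by positivity
  have hSp : (0 : ℝ) ≤ ∑ i, ℓ i ^ p :=
    Finset.sum_nonneg fun i _ => Real.rpow_nonneg (hℓ i) p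
  -- Step 1: LHS ≤ (∑ ℓ i ^ 2) / n
  have step1 : (1 / ((n : ℝ) - 1)) * (∑ i, ℓ i ^ 2 - (∑ i, ℓ i) ^ 2 / n) ≤
      (∑ i, ℓ i ^ 2) / n := by
    have hsq : (∑ i, ℓ i ^ 2) ≤ (∑ i, ℓ i) ^ 2 :=
      Finset.sum_sq_le_sq_sum_of_nonneg (fun i _ => hℓ i)
    rw [div_mul_eq_mul_div, one_mul, div_le_div_iff₀ hn1 hn0]
    have hnB : (∑ i, ℓ i) ^ 2 / n * n = (∑ i, ℓ i) ^ 2 := by field_simp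
    nlinarith [hsq, hnB]
  -- Step 2: power mean inequality
  have pm : (1 / (n : ℝ)) * ∑ i, ℓ i ^ 2 ≤
      ((1 / (n : ℝ)) * ∑ i, ℓ i ^ p) ^ (2 / p) := by
    have hq : (1 : ℝ) ≤ p / 2 := by linarith
    have key := Real.rpow_arith_mean_le_arith_mean_rpow Finset.univ
      (fun _ : Fin n => 1 / (n : ℝ)) (fun i => ℓ i ^ 2)
      (fun i _ => by positivity)
      (by rw [Finset.sum_const, Finset.card_univ, Fintype.card_fin, nsmul_eq_mul]
          field_simp)
      (fun i _ => by positivity) hq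
    have hz : ∀ i : Fin n, (ℓ i ^ 2 : ℝ) ^ (p / 2) = ℓ i ^ p := by
      intro i
      rw [← Real.rpow_natCast (ℓ i) 2, ← Real.rpow_mul (hℓ i)]
      congr 1
      push_cast
      ring
    simp_rw [hz] at key
    simp_rw [← Finset.mul_sum] at key
    have hA : (0 : ℝ) ≤ (1 / (n : ℝ)) * ∑ i, ℓ i ^ 2 := by positivity
    calc (1 / (n : ℝ)) * ∑ i, ℓ i ^ 2
        = (((1 / (n : ℝ)) * ∑ i, ℓ i ^ 2) ^ (p / 2)) ^ (2 / p) := by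
          rw [← Real.rpow_mul hA]
          rw [show p / 2 * (2 / p) = 1 by field_simp, Real.rpow_one]
      _ ≤ ((1 / (n : ℝ)) * ∑ i, ℓ i ^ p) ^ (2 / p) :=
          Real.rpow_le_rpow (Real.rpow_nonneg hA _) key (by positivity)
  -- rewrite RHS
  have hRHS : 4 * (n : ℝ) ^ (-2 / p) * (((∑ i, ℓ i ^ p) ^ (1 / p) / 2) ^ 2 : ℝ) =
      ((1 / (n : ℝ)) * ∑ i, ℓ i ^ p) ^ (2 / p) := by
    rw [div_pow, Real.mul_rpow (by positivity) hSp]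
    have h1 : ((∑ i, ℓ i ^ p) ^ (1 / p) : ℝ) ^ (2 : ℕ) = (∑ i, ℓ i ^ p) ^ (2 / p) := by
      rw [← Real.rpow_natCast ((∑ i, ℓ i ^ p) ^ (1 / p)) 2, ← Real.rpow_mul hSp,
        show (1 / p) * ((2 : ℕ) : ℝ) = 2 / p by push_cast; ring]
    have h2 : ((1 : ℝ) / n) ^ (2 / p : ℝ) = (n : ℝ) ^ (-2 / p) := by
      rw [one_div, show ((n:ℝ)⁻¹) = (n:ℝ) ^ (-(1:ℝ)) by
          rw [Real.rpow_neg hn0.le, Real.rpow_one],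
        ← Real.rpow_mul hn0.le, show (-(1:ℝ)) * (2 / p) = -2 / p by ring]
    rw [h1, h2]
    ring
  rw [hRHS]
  calc (1 / ((n : ℝ) - 1)) * (∑ i, ℓ i ^ 2 - (∑ i, ℓ i) ^ 2 / n)
      ≤ (∑ i, ℓ i ^ 2) / n := step1
    _ = (1 / (n : ℝ)) * ∑ i, ℓ i ^ 2 := by ring
    _ ≤ ((1 / (n : ℝ)) * ∑ i, ℓ i ^ p) ^ (2 / p) := pm
end

section
/- Let ℓ₁,…,ℓₙ be nonnegative reals with n ≥ 2. Then TSI(ℓ) ≤ (maxᵢ ℓᵢ)², where TSI is the unbiased sample variance. -/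
open Finset

theorem tsi_le_max_sq (n : ℕ) (hn : 2 ≤ n) (ℓ : Fin n → ℝ) (hℓ : ∀ i, 0 ≤ ℓ i) :
    (1 / ((n : ℝ) - 1)) * (∑ i, ℓ i ^ 2 - (∑ i, ℓ i) ^ 2 / n) ≤
      (Finset.univ.sup'
        (by
          haveI : Nonempty (Fin n) := Fin.pos_iff_nonempty.mp (by omega)
          exact Finset.univ_nonempty) ℓ) ^ 2 := by
  haveI : Nonempty (Fin n) := Fin.pos_iff_nonempty.mp (by omega)
  set M := Finset.univ.sup' Finset.univ_nonempty ℓ with hMdef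
  have hM : ∀ i, ℓ i ≤ M := fun i => Finset.le_sup' ℓ (Finset.mem_univ i)
  have hM0 : 0 ≤ M := le_trans (hℓ (Classical.arbitrary _)) (hM _)
  set S := ∑ i, ℓ i with hSdef
  have hS : 0 ≤ S := Finset.sum_nonneg fun i _ => hℓ i
  have hQ : ∑ i, ℓ i ^ 2 ≤ M * S := by
    rw [hSdef, Finset.mul_sum]
    exact Finset.sum_le_sum fun i _ => by
      have := hM i; have := hℓ i; nlinarith
  have hn2 : (2 : ℝ) ≤ n := by exact_mod_cast hn
  have hnpos : (0 : ℝ) < n := by linarith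
  have hn1 : (0 : ℝ) < (n : ℝ) - 1 := by linarith
  have hdiv : S ^ 2 / n * n = S ^ 2 := div_mul_cancel₀ _ (ne_of_gt hnpos)
  have hdivnn : 0 ≤ S ^ 2 / n := by positivity
  rw [div_mul_eq_mul_div, div_le_iff₀ hn1, one_mul]
  nlinarith [sq_nonneg (S - (n : ℝ) * M / 2), sq_nonneg ((n:ℝ) * M - S), mul_nonneg hM0 hS]
end

section
/- Let B₁, B₂ be barcodes with the same number n ≥ 2 of bars, with matched bar lengths ℓᵢ, ℓᵢ' ≥ 0 satisfying |ℓᵢ − ℓᵢ'| ≤ 2δ for every i. Then |TSI(B₁) − TSI(B₂)| ≤ (4/(n−1))·(L₁ + L₂)·δ, where Lⱼ is the total length of Bⱼ. -/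
open Finset

theorem tsi_bottleneck_stability (n : ℕ) (hn : 2 ≤ n) (ℓ ℓ' : Fin n → ℝ)
    (hℓ : ∀ i, 0 ≤ ℓ i) (hℓ' : ∀ i, 0 ≤ ℓ' i) (δ : ℝ)
    (hmatch : ∀ i, |ℓ i - ℓ' i| ≤ 2 * δ) :
    |(1 / ((n : ℝ) - 1)) * (∑ i, ℓ i ^ 2 - (∑ i, ℓ i) ^ 2 / n) -
        (1 / ((n : ℝ) - 1)) * (∑ i, ℓ' i ^ 2 - (∑ i, ℓ' i) ^ 2 / n)| ≤
      (4 / ((n : ℝ) - 1)) * ((∑ i, ℓ i) + (∑ i, ℓ' i)) * δ := by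
  have h2n : (2:ℝ) ≤ (n:ℝ) := by exact_mod_cast hn
  have hn1 : (0:ℝ) < (n:ℝ) - 1 := by linarith
  have hnpos : (0:ℝ) < (n:ℝ) := by linarith
  have hδ : 0 ≤ δ := by
    have h := hmatch ⟨0, by omega⟩
    have := abs_nonneg (ℓ ⟨0, by omega⟩ - ℓ' ⟨0, by omega⟩)
    linarith
  set S := ∑ i, ℓ i with hSdef
  set S' := ∑ i, ℓ' i with hS'def
  have hS : 0 ≤ S := Finset.sum_nonneg fun i _ => hℓ i
  have hS' : 0 ≤ S' := Finset.sum_nonneg fun i _ => hℓ' i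
  have h1 : |∑ i, ℓ i ^ 2 - ∑ i, ℓ' i ^ 2| ≤ 2 * δ * (S + S') := by
    rw [← Finset.sum_sub_distrib]
    calc |∑ i, (ℓ i ^ 2 - ℓ' i ^ 2)| ≤ ∑ i, |ℓ i ^ 2 - ℓ' i ^ 2| :=
          Finset.abs_sum_le_sum_abs _ _
      _ ≤ ∑ i, 2 * δ * (ℓ i + ℓ' i) := by
          refine Finset.sum_le_sum fun i _ => ?_
          have he : ℓ i ^ 2 - ℓ' i ^ 2 = (ℓ i - ℓ' i) * (ℓ i + ℓ' i) := by ring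
          rw [he, abs_mul, abs_of_nonneg (by linarith [hℓ i, hℓ' i] : 0 ≤ ℓ i + ℓ' i)]
          exact mul_le_mul_of_nonneg_right (hmatch i) (by linarith [hℓ i, hℓ' i])
      _ = 2 * δ * (S + S') := by
          rw [← Finset.mul_sum, Finset.sum_add_distrib]
  have h2 : |S - S'| ≤ (n:ℝ) * (2 * δ) := by
    rw [hSdef, hS'def, ← Finset.sum_sub_distrib]
    calc |∑ i, (ℓ i - ℓ' i)| ≤ ∑ i, |ℓ i - ℓ' i| := Finset.abs_sum_le_sum_abs _ _
      _ ≤ ∑ _i : Fin n, 2 * δ := Finset.sum_le_sum fun i _ => hmatch i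
      _ = (n:ℝ) * (2 * δ) := by simp [Finset.sum_const, mul_comm]
  have h3 : |S ^ 2 - S' ^ 2| ≤ (n:ℝ) * (2 * δ) * (S + S') := by
    have he : S ^ 2 - S' ^ 2 = (S - S') * (S + S') := by ring
    rw [he, abs_mul, abs_of_nonneg (by linarith : (0:ℝ) ≤ S + S')]
    exact mul_le_mul_of_nonneg_right h2 (by linarith)
  have h4 : |(S ^ 2 - S' ^ 2) / n| ≤ 2 * δ * (S + S') := by
    rw [abs_div, abs_of_pos hnpos, div_le_iff₀ hnpos]
    calc |S ^ 2 - S' ^ 2| ≤ (n:ℝ) * (2 * δ) * (S + S') := h3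
      _ = 2 * δ * (S + S') * n := by ring
  have key : |(∑ i, ℓ i ^ 2 - S ^ 2 / n) - (∑ i, ℓ' i ^ 2 - S' ^ 2 / n)| ≤
      4 * δ * (S + S') := by
    have he : (∑ i, ℓ i ^ 2 - S ^ 2 / n) - (∑ i, ℓ' i ^ 2 - S' ^ 2 / n) =
        (∑ i, ℓ i ^ 2 - ∑ i, ℓ' i ^ 2) - (S ^ 2 - S' ^ 2) / n := by ring
    rw [he]
    calc |(∑ i, ℓ i ^ 2 - ∑ i, ℓ' i ^ 2) - (S ^ 2 - S' ^ 2) / n| ≤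
        |∑ i, ℓ i ^ 2 - ∑ i, ℓ' i ^ 2| + |(S ^ 2 - S' ^ 2) / n| := abs_sub _ _
      _ ≤ 2 * δ * (S + S') + 2 * δ * (S + S') := add_le_add h1 h4
      _ = 4 * δ * (S + S') := by ring
  have hfac : (1 / ((n : ℝ) - 1)) * (∑ i, ℓ i ^ 2 - S ^ 2 / n) -
      (1 / ((n : ℝ) - 1)) * (∑ i, ℓ' i ^ 2 - S' ^ 2 / n) =
      (1 / ((n : ℝ) - 1)) * ((∑ i, ℓ i ^ 2 - S ^ 2 / n) - (∑ i, ℓ' i ^ 2 - S' ^ 2 / n)) := by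
    ring
  rw [hfac, abs_mul, abs_of_pos (by positivity : (0:ℝ) < 1 / ((n:ℝ) - 1))]
  calc 1 / ((n:ℝ) - 1) * |(∑ i, ℓ i ^ 2 - S ^ 2 / n) - (∑ i, ℓ' i ^ 2 - S' ^ 2 / n)| ≤
      1 / ((n:ℝ) - 1) * (4 * δ * (S + S')) :=
        mul_le_mul_of_nonneg_left key (by positivity)
    _ = (4 / ((n:ℝ) - 1)) * (S + S') * δ := by ring
end
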